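/- arXiv:2308.12868 — 4 statements merged into one kernel-verified Lean document; each statement's English description precedes it below -/
import Mathlib

section
/- Let n ≥ 1 and let M : Fin n → Fin n → ℝ be a matrix with the inverse Monge property, i.e., M i j + M r k ≥ M r j + M i k whenever i ≤ r and j ≤ k. Then for every permutation σ of Fin n, ∑_{i} M i (σ i) ≤ ∑_{i} M i i; that is, the identity permutation maximizes the trace tr(Πᵀ M) over all permutation matrices Π. -/
/-!
Exchange argument. If `σ ≠ 1`, let `m` be the largest point moved by `σ` and `k = σ⁻¹ m`; then
`k < m` and `σ m < m`. Composing `σ` with the transposition of `k` and `m` fixes `m`, shrinks the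
support, and by the inverse Monge inequality for rows `k ≤ m` and columns `σ m ≤ m` does not
decrease the assignment value. Iterating reaches the identity.
-/

open Equiv Finset

def IsInverseMonge {ι β : Type*} [LE ι] [Add β] [LE β] (M : ι → ι → β) : Prop :=
  ∀ i r j k : ι, i ≤ r → j ≤ k → M r j + M i k ≤ M i j + M r k

section InverseMonge

variable {ι β : Type*} [Fintype ι] [DecidableEq ι] [LinearOrder ι]
  [AddCommMonoid β] [PartialOrder β] [IsOrderedAddMonoid β] {M : ι → ι → β}

theorem sum_apply_perm_le_sum_apply_perm_mul_swap (hM : IsInverseMonge M)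
    (σ : Perm ι) {i r : ι} (hir : i ≤ r) (hσ : σ r ≤ σ i) :
    ∑ x, M x (σ x) ≤ ∑ x, M x ((σ * swap i r) x) := by
  obtain rfl | hne := eq_or_ne i r
  · simp
  have hout : ∀ x ∈ ({i, r} : Finset ι)ᶜ, M x ((σ * swap i r) x) = M x (σ x) := by
    intro x hx
    simp only [mem_compl, mem_insert, mem_singleton, not_or] at hx
    rw [Perm.mul_apply, swap_apply_of_ne_of_ne hx.1 hx.2]
  rw [← sum_add_sum_compl {i, r}, ← sum_add_sum_compl {i, r} (fun x => M x ((σ * swap i r) x)),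
    sum_congr rfl hout, sum_pair hne, sum_pair hne]
  simp only [Perm.mul_apply, swap_apply_left, swap_apply_right]
  refine add_le_add_left ?_ _
  rw [add_comm (M i (σ i))]
  exact hM i r (σ r) (σ i) hir hσ

theorem exists_perm_card_support_lt_of_ne_one (hM : IsInverseMonge M)
    {σ : Perm ι} (hσ : σ ≠ 1) :
    ∃ τ : Perm ι, #τ.support < #σ.support ∧ ∑ x, M x (σ x) ≤ ∑ x, M x (τ x) := by
  have hsupp : σ.support.Nonempty :=
    nonempty_iff_ne_empty.mpr (Perm.support_eq_empty_iff.not.mpr hσ)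
  set m := σ.support.max' hsupp
  have hm : σ m ≠ m := Perm.mem_support.mp (σ.support.max'_mem hsupp)
  set k := σ⁻¹ m
  have hσk : σ k = m := σ.apply_symm_apply m
  have hkm : k ≤ m := σ.support.le_max' k (Perm.mem_support.mpr (by
    rw [hσk]; intro hmk; exact hm (hmk ▸ hσk)))
  have hσm : σ m ≤ m :=
    σ.support.le_max' _ (Perm.apply_mem_support.mpr (Perm.mem_support.mpr hm))
  refine ⟨σ * swap k m, ?_, sum_apply_perm_le_sum_apply_perm_mul_swap hM σ hkm (hσk ▸ hσm)⟩
  rw [mul_swap_eq_swap_mul, hσk]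
  exact Perm.card_support_swap_mul hm

theorem sum_apply_perm_le_sum_diag (hM : IsInverseMonge M) (σ : Perm ι) :
    ∑ i, M i (σ i) ≤ ∑ i, M i i := by
  by_cases hσ : σ = 1
  · simp [hσ]
  obtain ⟨τ, hcard, hle⟩ := exists_perm_card_support_lt_of_ne_one hM hσ
  exact hle.trans (sum_apply_perm_le_sum_diag hM τ)
termination_by #σ.support

end InverseMonge

theorem inverse_monge_identity_optimal_general (n : ℕ) (M : Fin n → Fin n → ℝ)
    (hM : ∀ i r j k : Fin n, i ≤ r → j ≤ k → M i j + M r k ≥ M r j + M i k) :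
    ∀ σ : Equiv.Perm (Fin n), ∑ i, M i (σ i) ≤ ∑ i, M i i :=
  sum_apply_perm_le_sum_diag hM

/-- If `M` has the inverse Monge property, then the identity permutation
maximizes the assignment value `∑ i, M i (σ i)` over all permutations `σ`. -/
theorem inverse_monge_identity_optimal (n : ℕ) (hn : 1 ≤ n) (M : Fin n → Fin n → ℝ)
    (hM : ∀ i r j k : Fin n, i ≤ r → j ≤ k → M i j + M r k ≥ M r j + M i k) :
    ∀ σ : Equiv.Perm (Fin n), ∑ i, M i (σ i) ≤ ∑ i, M i i :=
  inverse_monge_identity_optimal_general n M hM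
end

section
/- Let n ≥ 1 and let v, q : Fin n → ℝ be positive antitone sequences. Define prices p* : Fin n → ℝ by downward recursion: p* (n-1) = v (n-1) * q (n-1), and for each k < n-1, p* k = v k * q k - max_{i > k} (v k * q i - p* i). Then p* is envy-free for the identity allocation: for all i, p* i ≤ v i * q i, and for all i, j, v i * q i - p* i ≥ v i * q j - p* j. -/
/-- Maximum of `f i` over indices `i > k`, well defined when `(k : ℕ) < n - 1`. -/
noncomputable def maxAbove {n : ℕ} (k : Fin n) (hk : (k : ℕ) < n - 1) (f : Fin n → ℝ) : ℝ :=
  (Finset.univ.filter fun i => k < i).sup'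
    ⟨⟨(k : ℕ) + 1, by omega⟩, by
      simp only [Finset.mem_filter, Finset.mem_univ, true_and, Fin.lt_def]
      omega⟩ f

/-- The recursively defined prices `p*` are envy-free for the identity
allocation: individual rationality and no envy. -/
theorem pstar_envy_free (n : ℕ) (hn : 1 ≤ n) (v q : Fin n → ℝ)
    (hvpos : ∀ i, 0 < v i) (hqpos : ∀ i, 0 < q i)
    (hv : Antitone v) (hq : Antitone q)
    (pstar : Fin n → ℝ)
    (hlast : pstar ⟨n - 1, by omega⟩ = v ⟨n - 1, by omega⟩ * q ⟨n - 1, by omega⟩)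
    (hrec : ∀ (k : Fin n) (hk : (k : ℕ) < n - 1),
      pstar k = v k * q k - maxAbove k hk (fun i => v k * q i - pstar i)) :
    (∀ i, pstar i ≤ v i * q i) ∧
    (∀ i j : Fin n, v i * q i - pstar i ≥ v i * q j - pstar j) := by
  -- no envy toward weakly higher indices (direct from the max)
  have term_le : ∀ m i : Fin n, m ≤ i →
      v m * q i - pstar i ≤ v m * q m - pstar m := by
    intro m i h
    rcases eq_or_lt_of_le h with rfl | h'
    · exact le_refl _
    · have hm : (m : ℕ) < n - 1 := by
        have := i.isLt
        have : (m : ℕ) < (i : ℕ) := h'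
        omega
      have hmem : i ∈ Finset.univ.filter (fun j => m < j) := by
        simp [h']
      have hle : v m * q i - pstar i ≤
          maxAbove m hm (fun j => v m * q j - pstar j) :=
        Finset.le_sup' (fun j => v m * q j - pstar j) hmem
      have := hrec m hm
      linarith
  -- the max is achieved at k+1
  have step : ∀ (k k1 : Fin n), (k1 : ℕ) = (k : ℕ) + 1 →
      v k * q k - pstar k =
        (v k - v k1) * q k1 + (v k1 * q k1 - pstar k1) := by
    intro k k1 hk1
    have hk : (k : ℕ) < n - 1 := by have := k1.isLt; omega
    have hklt : k < k1 := by
      rw [Fin.lt_def]; omega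
    have hmem : k1 ∈ Finset.univ.filter (fun j => k < j) := by simp [hklt]
    have hmax : maxAbove k hk (fun i => v k * q i - pstar i) =
        v k * q k1 - pstar k1 := by
      apply le_antisymm
      · apply Finset.sup'_le
        intro i hi
        have hki : k < i := by simpa using hi
        have hk1i : k1 ≤ i := by
          rw [Fin.le_def]
          have : (k : ℕ) < (i : ℕ) := hki
          omega
        have h1 : v k1 * q i - pstar i ≤ v k1 * q k1 - pstar k1 :=
          term_le k1 i hk1i
        have h2 : q i ≤ q k1 := hq hk1i
        have h3 : v k1 ≤ v k := hv (le_of_lt hklt)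
        nlinarith
      · exact Finset.le_sup' (fun i => v k * q i - pstar i) hmem
    have := hrec k hk
    rw [hmax] at this
    linarith
  -- main inequality upward: i ≤ j
  have up : ∀ d : ℕ, ∀ i j : Fin n, (j : ℕ) = (i : ℕ) + d →
      v i * q i - pstar i - (v j * q j - pstar j) ≥ (v i - v j) * q j := by
    intro d
    induction d with
    | zero =>
      intro i j hij
      have : i = j := Fin.ext (by omega)
      subst this
      simp
    | succ d ih =>
      intro i j hij
      have hj : (i : ℕ) + d < n := by have := j.isLt; omega
      set j' : Fin n := ⟨(i : ℕ) + d, hj⟩ with hj'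
      have h1 := ih i j' rfl
      have h2 := step j' j (by simp [hj', hij]; omega)
      have hij' : i ≤ j' := by rw [Fin.le_def]; simp [hj']
      have hj'j : j' ≤ j := by rw [Fin.le_def]; simp [hj']; omega
      have h3 : v j' ≤ v i := hv hij'
      have h4 : q j ≤ q j' := hq hj'j
      nlinarith
  -- main inequality downward: j ≤ i
  have down : ∀ d : ℕ, ∀ i j : Fin n, (i : ℕ) = (j : ℕ) + d →
      v i * q i - pstar i - (v j * q j - pstar j) ≥ (v i - v j) * q j := by
    intro d
    induction d with
    | zero =>
      intro i j hij
      have : i = j := Fin.ext (by omega)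
      subst this
      simp
    | succ d ih =>
      intro i j hij
      have hi : (j : ℕ) + d < n := by have := i.isLt; omega
      set i' : Fin n := ⟨(j : ℕ) + d, hi⟩ with hi'
      have h1 := ih i' j rfl
      have h2 := step i' i (by simp [hi', hij]; omega)
      have hji' : j ≤ i' := by rw [Fin.le_def]; simp [hi']
      have hi'i : i' ≤ i := by rw [Fin.le_def]; simp [hi']; omega
      have h3 : v i ≤ v i' := hv hi'i
      have h4 : q i ≤ q j := hq (le_trans hji' hi'i)
      nlinarith
  have main : ∀ i j : Fin n,
      v i * q i - pstar i - (v j * q j - pstar j) ≥ (v i - v j) * q j := by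
    intro i j
    rcases le_total i j with h | h
    · exact up ((j : ℕ) - (i : ℕ)) i j (by have : (i:ℕ) ≤ (j:ℕ) := h; omega)
    · exact down ((i : ℕ) - (j : ℕ)) i j (by have : (j:ℕ) ≤ (i:ℕ) := h; omega)
  have nonneg : ∀ i : Fin n, 0 ≤ v i * q i - pstar i := by
    intro i
    have hlt : n - 1 < n := by omega
    set last : Fin n := ⟨n - 1, hlt⟩ with hl
    have h1 := main i last
    have h2 : v last ≤ v i := hv (by rw [Fin.le_def]; have := i.isLt; simp [hl]; omega)
    have h3 : 0 < q last := hqpos last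
    have h4 : v last * q last - pstar last = 0 := by rw [hlast]; ring
    nlinarith
  constructor
  · intro i
    have := nonneg i
    linarith
  · intro i j
    have := main i j
    have h1 : v j * q j - pstar j ≥ 0 := nonneg j
    nlinarith [main i j, nonneg j]
end

section
/- Let n ≥ 1 and let v, q : Fin n → ℝ be positive antitone sequences. Suppose σ is a permutation of Fin n and p : Fin n → ℝ is a price vector such that the pair (σ, p) is an envy-free pricing (buyer i receives item σ i, with p (σ i) ≤ v i * q (σ i) for all i and v i * q (σ i) - p (σ i) ≥ v i * q j - p j for all i, j). Then σ maximizes social welfare: for every permutation τ of Fin n, ∑_{i} v i * q (σ i) ≥ ∑_{i} v i * q (τ i); in particular ∑_{i} v i * q (σ i) = ∑_{i} v i * q i. -/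
/-- If `(σ, p)` is an envy-free pricing (buyer `i` receives item `σ i`), then
`σ` maximizes social welfare over all permutations; in particular its welfare equals
that of the identity allocation. -/
theorem envy_free_allocation_maximizes_welfare (n : ℕ) (hn : 1 ≤ n) (v q : Fin n → ℝ)
    (hvpos : ∀ i, 0 < v i) (hqpos : ∀ i, 0 < q i)
    (hv : Antitone v) (hq : Antitone q)
    (σ : Equiv.Perm (Fin n)) (p : Fin n → ℝ)
    (hIR : ∀ i, p (σ i) ≤ v i * q (σ i))
    (hEF : ∀ i j : Fin n, v i * q (σ i) - p (σ i) ≥ v i * q j - p j) :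
    (∀ τ : Equiv.Perm (Fin n), ∑ i, v i * q (σ i) ≥ ∑ i, v i * q (τ i)) ∧
    ∑ i, v i * q (σ i) = ∑ i, v i * q i := by
  have key : ∀ i j : Fin n, 0 ≤ (v i - v j) * (q (σ i) - q (σ j)) := by
    intro i j
    have h1 := hEF i (σ j)
    have h2 := hEF j (σ i)
    nlinarith [h1, h2]
  have hmono : Monovary v (fun i => q (σ i)) := by
    intro i j hqlt
    by_contra hvl
    push_neg at hvl
    nlinarith [key i j]
  have hmax : ∀ τ : Equiv.Perm (Fin n), ∑ i, v i * q (σ i) ≥ ∑ i, v i * q (τ i) := by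
    intro τ
    have := hmono.sum_mul_comp_perm_le_sum_mul (σ := σ⁻¹ * τ)
    simpa using this
  refine ⟨hmax, le_antisymm ?_ (hmax 1)⟩
  have hmono2 : Monovary v q := by
    intro i j hqlt
    rcases le_total i j with h | h
    · exact absurd (hq h) (not_le.2 hqlt)
    · exact hv h
  simpa using hmono2.sum_mul_comp_perm_le_sum_mul (σ := σ)
end

section
/- Let n ≥ 2 and let v, q : Fin n → ℝ be positive antitone sequences. Fix k with 0 ≤ k < n-1, and suppose p : Fin n → ℝ is envy-free for the identity allocation and agrees with the recursive optimal prices on all indices above k (p i = p* i for all i > k). Then p k ≤ v k * q k - max_{i > k} (v k * q i - p* i); moreover, setting p k equal to this value (and keeping p i = p* i for i > k) preserves the envy-freeness conditions among buyers k, k+1, ..., n-1. -/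
/-- **Lemma 2 of the paper.** If `p` is envy-free for the identity allocation
and agrees with the optimal prices `p*` above index `k`, then
`p k ≤ v k * q k - max_{i > k} (v k * q i - p* i)`; moreover, setting `p k` equal to this
value preserves the envy-freeness conditions among buyers `k, k+1, …, n-1`. -/
theorem next_optimal_price (n : ℕ) (hn : 2 ≤ n) (v q : Fin n → ℝ)
    (hvpos : ∀ i, 0 < v i) (hqpos : ∀ i, 0 < q i)
    (hv : Antitone v) (hq : Antitone q)
    (pstar : Fin n → ℝ)
    (hlast : pstar ⟨n - 1, by omega⟩ = v ⟨n - 1, by omega⟩ * q ⟨n - 1, by omega⟩)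
    (hrec : ∀ (k : Fin n) (hk : (k : ℕ) < n - 1),
      pstar k = v k * q k - maxAbove k hk (fun i => v k * q i - pstar i))
    (k : Fin n) (hk : (k : ℕ) < n - 1)
    (p : Fin n → ℝ)
    (hIR : ∀ i, p i ≤ v i * q i)
    (hEF : ∀ i j : Fin n, v i * q i - p i ≥ v i * q j - p j)
    (hagree : ∀ i : Fin n, k < i → p i = pstar i) :
    p k ≤ v k * q k - maxAbove k hk (fun i => v k * q i - pstar i) ∧
    (∀ i : Fin n, k ≤ i →
      Function.update p k (v k * q k - maxAbove k hk (fun i => v k * q i - pstar i)) i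
        ≤ v i * q i) ∧
    (∀ i j : Fin n, k ≤ i → k ≤ j →
      v i * q i -
          Function.update p k (v k * q k - maxAbove k hk (fun i => v k * q i - pstar i)) i ≥
        v i * q j -
          Function.update p k (v k * q k - maxAbove k hk (fun i => v k * q i - pstar i)) j) := by

  set M := maxAbove k hk (fun i => v k * q i - pstar i) with hMdef
  have hMge : ∀ i : Fin n, k < i → v k * q i - pstar i ≤ M := by
    intro i hi
    rw [hMdef]; unfold maxAbove
    exact Finset.le_sup' (fun i => v k * q i - pstar i) (Finset.mem_filter.mpr ⟨Finset.mem_univ i, hi⟩)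
  have hMle : ∀ b : ℝ, (∀ i : Fin n, k < i → v k * q i - pstar i ≤ b) → M ≤ b := by
    intro b hb
    rw [hMdef]; unfold maxAbove
    apply Finset.sup'_le
    intro i hi
    exact hb i (by simpa using hi)
  have hk1 : ((k : ℕ) + 1) < n := by omega
  have hkk1 : k < (⟨(k : ℕ) + 1, hk1⟩ : Fin n) := by simp [Fin.lt_def]
  have hM0 : 0 ≤ M := by
    refine le_trans ?_ (hMge ⟨(k : ℕ) + 1, hk1⟩ hkk1)
    have h1 := hagree ⟨(k : ℕ) + 1, hk1⟩ hkk1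
    have h2 := hIR (⟨(k : ℕ) + 1, hk1⟩ : Fin n)
    have h3 : v (⟨(k : ℕ) + 1, hk1⟩ : Fin n) ≤ v k := hv (le_of_lt hkk1)
    have h4 := hqpos (⟨(k : ℕ) + 1, hk1⟩ : Fin n)
    nlinarith
  have goal1 : p k ≤ v k * q k - M := by
    have : M ≤ v k * q k - p k := by
      apply hMle
      intro i hi
      have := hEF k i
      have := hagree i hi
      linarith
    linarith
  refine ⟨goal1, ?_, ?_⟩
  · intro i hik
    by_cases h : i = k
    · subst i; rw [Function.update_self]; linarith
    · rw [Function.update_of_ne h]; exact hIR i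
  · intro i j hki hkj
    by_cases hi : i = k <;> by_cases hj : j = k
    · subst hi; subst hj; exact le_refl _
    · subst i
      have hj' : k < j := lt_of_le_of_ne hkj (Ne.symm hj)
      rw [Function.update_self, Function.update_of_ne hj]
      have := hMge j hj'
      have := hagree j hj'
      linarith
    · subst j
      have hi' : k < i := lt_of_le_of_ne hki (Ne.symm hi)
      rw [Function.update_self, Function.update_of_ne hi]
      have hsup : M ≤ v i * q i - p i - v i * q k + v k * q k := by
        apply hMle
        intro l hl
        have h1 := hEF i l
        have h2 := hagree l hl
        have h3 : v i ≤ v k := hv (le_of_lt hi')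
        have h4 : q l ≤ q k := hq (le_of_lt hl)
        nlinarith
      linarith
    · rw [Function.update_of_ne hi, Function.update_of_ne hj]
      exact hEF i j
end
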